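/- arXiv:2109.10087 — 2 statements merged into one kernel-verified Lean document; each statement's English description precedes it below -/
import Mathlib

section
/- Let E ⊆ ℝ^n be compact with H^d_∞(E) > 0 and let f ≥ 0 be continuous on E. Then for 1 < p < ∞, (1/H^d_∞(E)) ∫_E f dH^d_∞ ≤ C(n) ((1/H^d_∞(E)) ∫_E f^p dH^d_∞)^{1/p}, i.e., a Jensen-type inequality holds for Choquet integration against Hausdorff content, with constant depending only on n. -/
/-!
Only the monotonicity of the content enters. Put `μ t = H^d_∞({x ∈ E : f x > t}) ≤ H = H^d_∞(E)`,
`A = ∫₀^∞ μ` and `B = ∫₀^∞ μ(t) p t^{p-1} dt`. Cutting `A` at a level `T` gives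
`A ≤ H T + ∫_T^∞ μ`, while on `(T, ∞)` the weight `p t^{p-1}` is at least `T^{p-1}`. For
`T < A / (2H)` the tail is at least `H T`, so `H T^p ≤ B`; letting `T` increase to `A / (2H)`
yields `A / H ≤ 2 (B / H)^{1/p}`, i.e. the inequality with `C = 2`.
-/

open MeasureTheory Metric Set
open scoped ENNReal NNReal

/-- The `d`-dimensional Hausdorff content `H^d_∞`. -/
noncomputable def hcontent {n : ℕ} (d : ℝ) (A : Set (EuclideanSpace ℝ (Fin n))) : ℝ≥0∞ :=
  MeasureTheory.OuterMeasure.boundedBy (fun U => EMetric.diam U ^ d) A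

/-- The `p`-Choquet integral `∫_A f^p dH^d_∞ = p ∫_0^∞ H^d_∞({x ∈ A : f x > t}) t^{p-1} dt`. -/
noncomputable def choquet {n : ℕ} (d : ℝ) (p : ℝ) (A : Set (EuclideanSpace ℝ (Fin n)))
    (f : EuclideanSpace ℝ (Fin n) → ℝ) : ℝ≥0∞ :=
  ∫⁻ t in Set.Ioi (0 : ℝ),
    hcontent d {x | x ∈ A ∧ f x > t} * ENNReal.ofReal (p * t ^ (p - 1))

section LayerCake

variable {μ : ℝ → ℝ≥0∞} {H : ℝ≥0∞} {p : ℝ}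

theorem lintegral_Ioi_zero_le_mul_add_lintegral_Ioi (hμ : ∀ t, μ t ≤ H) (T : ℝ≥0) :
    ∫⁻ t in Ioi 0, μ t ≤ H * T + ∫⁻ t in Ioi (T : ℝ), μ t := by
  rw [← Ioc_union_Ioi_eq_Ioi T.coe_nonneg]
  refine (lintegral_union_le _ _ _).trans (add_le_add_left ?_ _)
  calc ∫⁻ t in Ioc 0 (T : ℝ), μ t ≤ ∫⁻ _ in Ioc 0 (T : ℝ), H :=
        setLIntegral_mono' measurableSet_Ioc fun t _ => hμ t
    _ = H * T := by simp

theorem rpow_mul_lintegral_Ioi_le (hp : 1 ≤ p) (T : ℝ≥0) :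
    (T : ℝ≥0∞) ^ (p - 1) * ∫⁻ t in Ioi (T : ℝ), μ t ≤
      ∫⁻ t in Ioi 0, μ t * ENNReal.ofReal (p * t ^ (p - 1)) := by
  rw [← lintegral_const_mul' _ _ (ENNReal.rpow_ne_top_of_nonneg (by linarith) ENNReal.coe_ne_top)]
  calc ∫⁻ t in Ioi (T : ℝ), (T : ℝ≥0∞) ^ (p - 1) * μ t
      ≤ ∫⁻ t in Ioi (T : ℝ), μ t * ENNReal.ofReal (p * t ^ (p - 1)) := by
        refine setLIntegral_mono' measurableSet_Ioi fun t (ht : (T : ℝ) < t) => ?_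
        rw [mul_comm, ← ENNReal.ofReal_coe_nnreal,
          ENNReal.ofReal_rpow_of_nonneg T.coe_nonneg (by linarith)]
        gcongr
        calc (T : ℝ) ^ (p - 1) = 1 * (T : ℝ) ^ (p - 1) := (one_mul _).symm
          _ ≤ p * t ^ (p - 1) := by gcongr
    _ ≤ _ := lintegral_mono' (Measure.restrict_mono (Ioi_subset_Ioi T.coe_nonneg) le_rfl) le_rfl

theorem mul_rpow_le_lintegral_of_two_mul_le (hμ : ∀ t, μ t ≤ H) (hH : H ≠ ∞) (hp : 1 ≤ p)
    (r : ℝ≥0) (hr : 2 * (H * r) ≤ ∫⁻ t in Ioi 0, μ t) :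
    H * (r : ℝ≥0∞) ^ p ≤ ∫⁻ t in Ioi 0, μ t * ENNReal.ofReal (p * t ^ (p - 1)) := by
  have tail : H * r ≤ ∫⁻ t in Ioi (r : ℝ), μ t :=
    (ENNReal.add_le_add_iff_left (ENNReal.mul_ne_top hH ENNReal.coe_ne_top)).1
      ((two_mul (H * r) ▸ hr).trans (lintegral_Ioi_zero_le_mul_add_lintegral_Ioi hμ r))
  calc H * (r : ℝ≥0∞) ^ p = (r : ℝ≥0∞) ^ (p - 1) * (H * r) := by
        rw [← sub_add_cancel p 1, ENNReal.rpow_add_of_nonneg _ _ (by linarith) zero_le_one,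
          add_sub_cancel_right, ENNReal.rpow_one]
        ring
    _ ≤ (r : ℝ≥0∞) ^ (p - 1) * ∫⁻ t in Ioi (r : ℝ), μ t := by gcongr
    _ ≤ _ := rpow_mul_lintegral_Ioi_le hp r

theorem lintegral_div_le_two_mul_rpow (hμ : ∀ t, μ t ≤ H) (hp : 1 ≤ p) :
    (∫⁻ t in Ioi 0, μ t) / H ≤
      2 * ((∫⁻ t in Ioi 0, μ t * ENNReal.ofReal (p * t ^ (p - 1))) / H) ^ (1 / p) := by
  rcases eq_or_ne H ∞ with rfl | hH
  · simp
  rcases eq_or_ne H 0 with rfl | hH0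
  · simp [le_zero_iff.1 (hμ _)]
  rw [← ENNReal.mul_div_cancel two_ne_zero ENNReal.ofNat_ne_top (b := (∫⁻ t in Ioi 0, μ t) / H)]
  gcongr
  -- testing against finite levels `r < A / (2H)` also covers the case `A = ∞`
  refine ENNReal.le_of_forall_nnreal_lt fun r hr => ?_
  rw [one_div, ENNReal.le_rpow_inv_iff (by linarith),
    ENNReal.le_div_iff_mul_le (Or.inl hH0) (Or.inl hH), mul_comm]
  refine mul_rpow_le_lintegral_of_two_mul_le hμ hH hp r ?_
  calc 2 * (H * r) = r * 2 * H := by ring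
    _ ≤ _ := ENNReal.mul_le_of_le_div (ENNReal.mul_le_of_le_div hr.le)

end LayerCake

/-- Jensen-type inequality for Choquet integration: for `E ⊆ ℝ^n` compact with
`H^d_∞(E) > 0`, `f ≥ 0` continuous on `E`, and `1 < p < ∞`,
`(1/H^d_∞(E)) ∫_E f dH^d_∞ ≤ C(n) ((1/H^d_∞(E)) ∫_E f^p dH^d_∞)^{1/p}`. -/
theorem choquet_jensen (n : ℕ) :
    ∃ C : ℝ, 0 < C ∧ ∀ (d : ℝ), 0 ≤ d → ∀ (p : ℝ), 1 < p →
      ∀ (E : Set (EuclideanSpace ℝ (Fin n))), IsCompact E → 0 < hcontent d E →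
      ∀ f : EuclideanSpace ℝ (Fin n) → ℝ, ContinuousOn f E → (∀ x ∈ E, 0 ≤ f x) →
      choquet d 1 E f / hcontent d E ≤
        ENNReal.ofReal C * (choquet d p E f / hcontent d E) ^ (1 / p) := by
  refine ⟨2, two_pos, fun d _ p hp E _ _ f _ _ => ?_⟩
  have choquet_one : choquet d 1 E f = ∫⁻ t in Ioi 0, hcontent d {x | x ∈ E ∧ f x > t} := by
    simp [choquet]
  rw [choquet_one, ENNReal.ofReal_ofNat]
  exact lintegral_div_le_two_mul_rpow (fun t => measure_mono fun x hx => hx.1) hp.le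
end

section
/- Let μ be a Borel measure on ℝ^n with μ(B) ≤ C₀ r(B)^d for all balls, and suppose E ⊆ Σ ⊆ ℝ^n with μ supported on E. If for every ball B centered on spt(μ) the set Σ is lower content d-regular with constant c₁, then for every ball B centered on spt(μ) and every affine d-plane L, β_μ^{d,2}(B, L) ≤ C(C₀, c₁, n, d) · β_Σ^{d,2}(B, L); consequently β_μ^{d,2}(B) ≤ C β_Σ^{d,2}(B). -/
open MeasureTheory Metric Set
open scoped ENNReal NNReal

/-- `β_μ^{d,2}(B(x,r),L)²  = (1/r^d) ∫_{B(x,r)} (dist(y,L)/r)² dμ(y)`. -/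
noncomputable def betaMuSq {n : ℕ} (d : ℕ) (μ : Measure (EuclideanSpace ℝ (Fin n)))
    (x : EuclideanSpace ℝ (Fin n)) (r : ℝ) (L : AffineSubspace ℝ (EuclideanSpace ℝ (Fin n))) :
    ℝ≥0∞ :=
  (ENNReal.ofReal (r ^ d))⁻¹ *
    ∫⁻ y in Metric.ball x r, ENNReal.ofReal ((Metric.infDist y (L : Set _) / r) ^ 2) ∂μ

/-- `β_Σ^{d,2}(B(x,r),L)² = (1/r^d) ∫_{Σ ∩ B(x,r)} (dist(y,L)/r)² dH^d_∞(y)` (Choquet). -/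
noncomputable def betaSetSq {n : ℕ} (d : ℕ) (SS : Set (EuclideanSpace ℝ (Fin n)))
    (x : EuclideanSpace ℝ (Fin n)) (r : ℝ) (L : AffineSubspace ℝ (EuclideanSpace ℝ (Fin n))) :
    ℝ≥0∞ :=
  (ENNReal.ofReal (r ^ d))⁻¹ *
    ∫⁻ t in Set.Ioi (0 : ℝ),
      hcontent (d : ℝ) {y | y ∈ SS ∩ Metric.ball x r ∧
        (Metric.infDist y (L : Set _) / r) ^ 2 > t}

/-- From the growth condition, `μ` of any single set is controlled by `C₀ diam^d`. -/
lemma mu_le_diam_pow {n d : ℕ} {C₀ : ℝ} (hC₀ : 0 < C₀)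
    {μ : Measure (EuclideanSpace ℝ (Fin n))}
    (hμ : ∀ x r, 0 < r → μ (Metric.ball x r) ≤ ENNReal.ofReal (C₀ * r ^ d))
    (U : Set (EuclideanSpace ℝ (Fin n))) :
    μ U ≤ ENNReal.ofReal C₀ * ⨆ _ : U.Nonempty, EMetric.diam U ^ (d : ℝ) := by
  rcases U.eq_empty_or_nonempty with rfl | hU
  · simp
  rcases hU with ⟨x, hx⟩
  rw [iSup_pos ⟨x, hx⟩]
  rcases eq_or_ne (EMetric.diam U) ⊤ with htop | hfin
  · rcases Nat.eq_zero_or_pos d with rfl | hd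
    · -- d = 0 : diam^0 = 1, and μ U ≤ μ univ ≤ C₀
      rw [htop]
      simp only [Nat.cast_zero, ENNReal.rpow_zero, mul_one]
      have huniv : (Set.univ : Set (EuclideanSpace ℝ (Fin n))) =
          ⋃ m : ℕ, Metric.ball x (m + 1) := by
        ext y; simp only [Set.mem_univ, Set.mem_iUnion, Metric.mem_ball, true_iff]
        obtain ⟨m, hm⟩ := exists_nat_gt (dist y x)
        exact ⟨m, hm.trans_le (by linarith)⟩
      have hdir : Directed (· ⊆ ·) (fun m : ℕ => Metric.ball x (m + 1 : ℝ)) := by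
        intro i j
        rcases le_total i j with h | h
        · exact ⟨j, Metric.ball_subset_ball (by exact_mod_cast by linarith), subset_rfl⟩
        · exact ⟨i, subset_rfl, Metric.ball_subset_ball (by exact_mod_cast by linarith)⟩
      calc μ U ≤ μ Set.univ := measure_mono (Set.subset_univ _)
        _ = ⨆ m : ℕ, μ (Metric.ball x (m + 1)) := by
            rw [huniv, hdir.measure_iUnion]
        _ ≤ ENNReal.ofReal C₀ := by
            refine iSup_le fun m => (hμ x (m + 1) (by positivity)).trans_eq ?_
            norm_num
    · -- d ≥ 1 : RHS = ∞
      rw [htop, ENNReal.top_rpow_of_pos (by exact_mod_cast hd), ENNReal.mul_top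
        (by simp [ENNReal.ofReal_eq_zero, not_le, hC₀])]
      exact le_top
  · -- finite diameter: ε-fattening argument
    set R : ℝ := (EMetric.diam U).toReal with hR
    have hR0 : 0 ≤ R := ENNReal.toReal_nonneg
    have key : ∀ ε > (0 : ℝ), μ U ≤ ENNReal.ofReal (C₀ * (R + ε) ^ d) := by
      intro ε hε
      have hsub : U ⊆ Metric.ball x (R + ε) := by
        intro y hy
        have := Metric.dist_le_diam_of_mem' hfin hy hx
        rw [Metric.mem_ball]
        calc dist y x ≤ Metric.diam U := this
          _ = R := rfl
          _ < R + ε := by linarith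
      exact (measure_mono hsub).trans (hμ x (R + ε) (by linarith))
    have hlim : Filter.Tendsto (fun ε : ℝ => ENNReal.ofReal (C₀ * (R + ε) ^ d))
        (nhdsWithin 0 (Set.Ioi 0)) (nhds (ENNReal.ofReal (C₀ * R ^ d))) := by
      have hc : Continuous fun ε : ℝ => ENNReal.ofReal (C₀ * (R + ε) ^ d) := by
        exact ENNReal.continuous_ofReal.comp
          (continuous_const.mul ((continuous_const.add continuous_id).pow d))
      have := hc.tendsto 0
      simp only [add_zero] at this
      exact this.mono_left nhdsWithin_le_nhds
    have hmu : μ U ≤ ENNReal.ofReal (C₀ * R ^ d) := by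
      refine ge_of_tendsto hlim ?_
      filter_upwards [self_mem_nhdsWithin] with ε hε
      exact key ε hε
    refine hmu.trans_eq ?_
    rw [ENNReal.ofReal_mul hC₀.le, ENNReal.rpow_natCast,
      ← ENNReal.ofReal_toReal hfin, ← ENNReal.ofReal_pow hR0]

/-- Frostman-type comparison: growth `μ(B) ≤ C₀ r^d` implies `μ ≤ C₀ · H^d_∞`. -/
lemma mu_le_hcontent {n d : ℕ} {C₀ : ℝ} (hC₀ : 0 < C₀)
    {μ : Measure (EuclideanSpace ℝ (Fin n))}
    (hμ : ∀ x r, 0 < r → μ (Metric.ball x r) ≤ ENNReal.ofReal (C₀ * r ^ d))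
    (A : Set (EuclideanSpace ℝ (Fin n))) :
    μ A ≤ ENNReal.ofReal C₀ * hcontent (d : ℝ) A := by
  rw [hcontent, MeasureTheory.OuterMeasure.boundedBy_apply]
  rw [ENNReal.mul_iInf_of_ne (by simp [ENNReal.ofReal_eq_zero, not_le, hC₀]) ENNReal.ofReal_ne_top]
  refine le_iInf fun t => ?_
  rw [ENNReal.mul_iInf_of_ne (by simp [ENNReal.ofReal_eq_zero, not_le, hC₀]) ENNReal.ofReal_ne_top]
  refine le_iInf fun ht => ?_
  calc μ A ≤ μ (⋃ m, t m) := measure_mono ht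
    _ ≤ ∑' m, μ (t m) := measure_iUnion_le t
    _ ≤ ∑' m, ENNReal.ofReal C₀ * ⨆ _ : (t m).Nonempty, EMetric.diam (t m) ^ (d : ℝ) :=
        ENNReal.tsum_le_tsum fun m => mu_le_diam_pow hC₀ hμ (t m)
    _ = ENNReal.ofReal C₀ * ∑' m, ⨆ _ : (t m).Nonempty, EMetric.diam (t m) ^ (d : ℝ) :=
        ENNReal.tsum_mul_left

set_option maxHeartbeats 1000000 in
/-- if `μ` has growth `μ(B) ≤ C₀ r(B)^d`, is supported on `E ⊆ Σ`, and `Σ` is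
lower content `d`-regular (constant `c₁`) on balls centered on `spt μ`, then for every such
ball and every affine `d`-plane `L`, `β_μ^{d,2}(B,L) ≤ C β_Σ^{d,2}(B,L)`, and consequently
`β_μ^{d,2}(B) ≤ C β_Σ^{d,2}(B)`, with `C = C(C₀, c₁, n, d)`. -/
theorem betaMu_le_betaSet (n d : ℕ) (C₀ c₁ : ℝ) (hC₀ : 0 < C₀) (hc₁ : 0 < c₁) :
    ∃ C : ℝ, 0 < C ∧ ∀ (μ : Measure (EuclideanSpace ℝ (Fin n)))
      (E SS : Set (EuclideanSpace ℝ (Fin n))),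
      (∀ x r, 0 < r → μ (Metric.ball x r) ≤ ENNReal.ofReal (C₀ * r ^ d)) →
      μ (Eᶜ) = 0 → E ⊆ SS →
      (∀ x ∈ E, ∀ r : ℝ, 0 < r →
        ENNReal.ofReal (c₁ * r ^ d) ≤ hcontent (d : ℝ) (SS ∩ Metric.ball x r)) →
      ∀ x ∈ E, ∀ r : ℝ, 0 < r →
        (∀ L : AffineSubspace ℝ (EuclideanSpace ℝ (Fin n)),
          Module.finrank ℝ L.direction = d →
          (betaMuSq d μ x r L) ^ (1/2 : ℝ) ≤
            ENNReal.ofReal C * (betaSetSq d SS x r L) ^ (1/2 : ℝ)) ∧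
        (⨅ (L : AffineSubspace ℝ (EuclideanSpace ℝ (Fin n)))
            (_ : Module.finrank ℝ L.direction = d), (betaMuSq d μ x r L) ^ (1/2 : ℝ)) ≤
          ENNReal.ofReal C *
          (⨅ (L : AffineSubspace ℝ (EuclideanSpace ℝ (Fin n)))
            (_ : Module.finrank ℝ L.direction = d), (betaSetSq d SS x r L) ^ (1/2 : ℝ)) := by
  refine ⟨Real.sqrt C₀ + 1, by positivity, ?_⟩
  intro μ E SS hμ hE hES _hreg x _hx r hr
  have hC0' : (ENNReal.ofReal C₀) ≠ 0 := by simp [ENNReal.ofReal_eq_zero, not_le, hC₀]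
  -- Key squared inequality, for every L.
  have key : ∀ L : AffineSubspace ℝ (EuclideanSpace ℝ (Fin n)),
      betaMuSq d μ x r L ≤ ENNReal.ofReal C₀ * betaSetSq d SS x r L := by
    intro L
    rw [betaMuSq, betaSetSq, mul_left_comm]
    refine mul_le_mul_right ?_ _
    set f : EuclideanSpace ℝ (Fin n) → ℝ := fun y => (Metric.infDist y (L : Set _) / r) ^ 2
      with hf
    have hfm : Measurable f := by fun_prop
    have layer := MeasureTheory.lintegral_eq_lintegral_meas_lt (μ.restrict (Metric.ball x r))
      (f := f) (Filter.Eventually.of_forall fun y => sq_nonneg _) hfm.aemeasurable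
    rw [layer]
    rw [← MeasureTheory.lintegral_const_mul' _ _ ENNReal.ofReal_ne_top]
    refine MeasureTheory.lintegral_mono fun t => ?_
    -- pointwise comparison of superlevel sets
    rw [Measure.restrict_apply' measurableSet_ball]
    set S : Set (EuclideanSpace ℝ (Fin n)) := {a | t < f a} ∩ Metric.ball x r with hS
    have h1 : μ S ≤ μ (S ∩ E) := by
      have := measure_le_inter_add_diff μ S E
      have h0 : μ (S \ E) = 0 :=
        measure_mono_null (fun y hy => hy.2) hE
      simpa [h0] using this
    refine h1.trans ?_
    refine (mu_le_hcontent hC₀ hμ (S ∩ E)).trans ?_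
    refine mul_le_mul_right (MeasureTheory.OuterMeasure.mono _ ?_) _
    rintro y ⟨⟨hyt, hyb⟩, hyE⟩
    exact ⟨⟨hES hyE, hyb⟩, hyt⟩
  -- square-root version
  have sqrtC : (ENNReal.ofReal C₀) ^ (1/2 : ℝ) ≤ ENNReal.ofReal (Real.sqrt C₀ + 1) := by
    rw [ENNReal.ofReal_rpow_of_nonneg hC₀.le (by norm_num)]
    exact ENNReal.ofReal_le_ofReal (by rw [← Real.sqrt_eq_rpow]; linarith)
  have key' : ∀ L : AffineSubspace ℝ (EuclideanSpace ℝ (Fin n)),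
      (betaMuSq d μ x r L) ^ (1/2 : ℝ) ≤
        ENNReal.ofReal (Real.sqrt C₀ + 1) * (betaSetSq d SS x r L) ^ (1/2 : ℝ) := by
    intro L
    calc (betaMuSq d μ x r L) ^ (1/2 : ℝ)
        ≤ (ENNReal.ofReal C₀ * betaSetSq d SS x r L) ^ (1/2 : ℝ) :=
          ENNReal.rpow_le_rpow (key L) (by norm_num)
      _ = (ENNReal.ofReal C₀) ^ (1/2 : ℝ) * (betaSetSq d SS x r L) ^ (1/2 : ℝ) :=
          ENNReal.mul_rpow_of_nonneg _ _ (by norm_num)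
      _ ≤ ENNReal.ofReal (Real.sqrt C₀ + 1) * (betaSetSq d SS x r L) ^ (1/2 : ℝ) :=
          mul_le_mul_left sqrtC _
  refine ⟨fun L _ => key' L, ?_⟩
  -- infimum version
  by_cases hne : ∃ L : AffineSubspace ℝ (EuclideanSpace ℝ (Fin n)),
      Module.finrank ℝ L.direction = d
  · haveI : Nonempty {L : AffineSubspace ℝ (EuclideanSpace ℝ (Fin n)) //
        Module.finrank ℝ L.direction = d} := ⟨⟨hne.choose, hne.choose_spec⟩⟩
    rw [iInf_subtype', iInf_subtype',
      ENNReal.mul_iInf_of_ne (by simp [ENNReal.ofReal_eq_zero, not_le]; positivity)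
        ENNReal.ofReal_ne_top]
    exact le_iInf fun L => (iInf_le _ L).trans (key' L.1)
  · push_neg at hne
    have h1 : (⨅ (L : AffineSubspace ℝ (EuclideanSpace ℝ (Fin n)))
        (_ : Module.finrank ℝ L.direction = d), (betaSetSq d SS x r L) ^ (1/2 : ℝ)) = ⊤ := by
      simp only [iInf_eq_top]
      intro L hL
      exact absurd hL (hne L)
    rw [h1, ENNReal.mul_top (by simp [ENNReal.ofReal_eq_zero, not_le]; positivity)]
    exact le_top
end
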